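/- For every ℓ with 0 < ℓ < 2·arsinh(1) and every s ∈ [−X(ℓ), X(ℓ)], one has ∫_{−X(ℓ)}^{X(ℓ)} e^{−|s − s₀|}·ρ_ℓ(s₀)^{−2} ds₀ ≤ 6·ρ_ℓ(s)^{−2}, where ρ_ℓ(s) = ℓ/(2π·cos(ℓ·s/(2π))) and X(ℓ) = (2π/ℓ)·(π/2 − arctan(sinh(ℓ/2))). -/

import Mathlib

/-! Put `κ = ℓ / 2π` and `θ = π/2 - arctan (sinh (ℓ/2))`, so that the collar is `|κ s| ≤ θ`,
`cos θ = tanh (ℓ/2)` and `sin θ = 1 / cosh (ℓ/2)`. On `[-θ, θ]` the cosine is `sin θ`-Lipschitz,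
and `3 κ sin θ ≤ tanh (ℓ/2) ≤ cos (κ s)` because `sinh x ≥ x` and `π > 3`; hence
`cos (κ t) ≤ cos (κ s) (1 + |s - t|/3) ≤ cos (κ s) e^{|s - t|/3}`.
Since `ρ_ℓ⁻² = (2π cos (κ ·) / ℓ)²`, this is the pointwise bound
`e^{-|s-t|} ρ_ℓ(t)⁻² ≤ e^{-|s-t|/3} ρ_ℓ(s)⁻²`, and `∫ e^{-|s-t|/3} dt ≤ 6`. -/

/-- Half-length of the hyperbolic collar around a geodesic of length `ℓ`. -/
noncomputable def collarX (ℓ : ℝ) : ℝ :=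
  2 * Real.pi / ℓ * (Real.pi / 2 - Real.arctan (Real.sinh (ℓ / 2)))

/-- Conformal factor of the hyperbolic collar. -/
noncomputable def collarRho (ℓ s : ℝ) : ℝ :=
  ℓ / (2 * Real.pi * Real.cos (ℓ * s / (2 * Real.pi)))

open Real Set

lemma integral_exp_div_le {c : ℝ} (hc : 0 < c) (a : ℝ) : ∫ u in a..0, exp (u / c) ≤ c := by
  rw [intervalIntegral.integral_comp_div exp hc.ne', integral_exp, zero_div, exp_zero, smul_eq_mul]
  nlinarith [exp_pos (a / c)]

lemma integral_exp_neg_abs_sub_div_le {a b c s : ℝ} (hc : 0 < c) (has : a ≤ s) (hsb : s ≤ b) :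
    ∫ t in a..b, exp (-|s - t| / c) ≤ 2 * c := by
  have hcont : Continuous fun t => exp (-|s - t| / c) := by fun_prop
  have hleft : ∫ t in a..s, exp (-|s - t| / c) = ∫ u in a - s..0, exp (u / c) := by
    rw [← sub_self s, ← intervalIntegral.integral_comp_sub_right (fun u => exp (u / c))]
    refine intervalIntegral.integral_congr fun t ht => ?_
    rw [uIcc_of_le has] at ht
    simp only [abs_of_nonneg (sub_nonneg.2 ht.2), neg_sub]
  have hright : ∫ t in s..b, exp (-|s - t| / c) = ∫ u in s - b..0, exp (u / c) := by
    rw [← sub_self s, ← intervalIntegral.integral_comp_sub_left (fun u => exp (u / c))]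
    refine intervalIntegral.integral_congr fun t ht => ?_
    rw [uIcc_of_le hsb] at ht
    simp only [abs_of_nonpos (sub_nonpos.2 ht.1), neg_neg]
  rw [← intervalIntegral.integral_add_adjacent_intervals (hcont.intervalIntegrable a s)
    (hcont.intervalIntegrable s b), hleft, hright]
  linarith [integral_exp_div_le hc (a - s), integral_exp_div_le hc (s - b)]

lemma abs_sin_le_sin_of_abs_le {x A : ℝ} (hA : A ≤ π / 2) (hx : |x| ≤ A) : |sin x| ≤ sin A := by
  rw [abs_sin_eq_sin_abs_of_abs_le_pi (by linarith [pi_pos])]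
  exact sin_le_sin_of_le_of_le_pi_div_two (by linarith [abs_nonneg x, pi_pos]) hA hx

lemma cos_le_cos_of_abs_le {x A : ℝ} (hA : A ≤ π) (hx : |x| ≤ A) : cos A ≤ cos x := by
  rw [← cos_abs x]
  exact cos_le_cos_of_nonneg_of_le_pi (abs_nonneg x) hA hx

lemma abs_cos_sub_cos_le_sin_mul {x y A : ℝ} (hA : A ≤ π / 2) (hx : |x| ≤ A) (hy : |y| ≤ A) :
    |cos x - cos y| ≤ sin A * |x - y| := by
  have hmid : |(x + y) / 2| ≤ A := by
    rw [abs_div, abs_two]; linarith [abs_add_le x y]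
  have hhalf : |sin ((x - y) / 2)| ≤ |x - y| / 2 := by
    simpa [abs_div] using abs_sin_le_abs (x := (x - y) / 2)
  calc |cos x - cos y| = 2 * |sin ((x + y) / 2)| * |sin ((x - y) / 2)| := by
        rw [cos_sub_cos, abs_mul, abs_mul, abs_neg, abs_two]
    _ ≤ 2 * sin A * (|x - y| / 2) := by
        have hsinA : 0 ≤ sin A :=
          sin_nonneg_of_nonneg_of_le_pi ((abs_nonneg x).trans hx) (by linarith [pi_pos])
        gcongr
        exact abs_sin_le_sin_of_abs_le hA hmid
    _ = sin A * |x - y| := by ring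

/-- `collarX ℓ = collarAngle ℓ / (ℓ / 2π)`, so the collar is `|ℓ s / 2π| ≤ collarAngle ℓ`. -/
noncomputable def collarAngle (ℓ : ℝ) : ℝ := π / 2 - arctan (sinh (ℓ / 2))

lemma sqrt_one_add_sinh_sq (x : ℝ) : √(1 + sinh x ^ 2) = cosh x := by
  rw [← cosh_sq', sqrt_sq (cosh_pos x).le]

lemma cos_collarAngle (ℓ : ℝ) : cos (collarAngle ℓ) = tanh (ℓ / 2) := by
  rw [collarAngle, cos_pi_div_two_sub, sin_arctan, sqrt_one_add_sinh_sq, tanh_eq_sinh_div_cosh]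

lemma sin_collarAngle (ℓ : ℝ) : sin (collarAngle ℓ) = (cosh (ℓ / 2))⁻¹ := by
  rw [collarAngle, sin_pi_div_two_sub, cos_arctan, sqrt_one_add_sinh_sq, one_div]

lemma collarAngle_le_pi_div_two {ℓ : ℝ} (hℓ : 0 ≤ ℓ) : collarAngle ℓ ≤ π / 2 := by
  have harctan : 0 ≤ arctan (sinh (ℓ / 2)) := arctan_nonneg.2 (sinh_nonneg_iff.2 (by linarith))
  rw [collarAngle]; linarith

lemma abs_mul_div_le_collarAngle {ℓ u : ℝ} (hℓ : 0 < ℓ) (hu : |u| ≤ collarX ℓ) :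
    |ℓ * u / (2 * π)| ≤ collarAngle ℓ := by
  have hX : collarX ℓ = collarAngle ℓ / (ℓ / (2 * π)) := by
    rw [collarX, collarAngle]; field_simp
  rw [hX, le_div_iff₀ (by positivity)] at hu
  rw [abs_div, abs_mul, abs_of_pos hℓ, abs_of_pos (by positivity : (0 : ℝ) < 2 * π)]
  exact (le_of_eq (by ring)).trans hu

lemma tanh_le_cos_of_abs_le_collarX {ℓ u : ℝ} (hℓ : 0 < ℓ) (hu : |u| ≤ collarX ℓ) :
    tanh (ℓ / 2) ≤ cos (ℓ * u / (2 * π)) := by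
  rw [← cos_collarAngle]
  exact cos_le_cos_of_abs_le (by linarith [collarAngle_le_pi_div_two hℓ.le, pi_pos])
    (abs_mul_div_le_collarAngle hℓ hu)

lemma cos_nonneg_of_abs_le_collarX {ℓ u : ℝ} (hℓ : 0 < ℓ) (hu : |u| ≤ collarX ℓ) :
    0 ≤ cos (ℓ * u / (2 * π)) := by
  have hu' := (abs_mul_div_le_collarAngle hℓ hu).trans (collarAngle_le_pi_div_two hℓ.le)
  exact cos_nonneg_of_neg_pi_div_two_le_of_le (abs_le.1 hu').1 (abs_le.1 hu').2

lemma sin_collarAngle_mul_le {ℓ : ℝ} (hℓ : 0 ≤ ℓ) :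
    3 * (ℓ / (2 * π)) * sin (collarAngle ℓ) ≤ tanh (ℓ / 2) := by
  have hsinh : ℓ / 2 ≤ sinh (ℓ / 2) := self_le_sinh_iff.2 (by linarith)
  rw [sin_collarAngle, tanh_eq_sinh_div_cosh, ← div_eq_mul_inv]
  gcongr ?_ / _
  rw [mul_div_assoc', div_le_iff₀ (by positivity)]
  nlinarith [pi_gt_three]

lemma cos_le_cos_mul_exp_of_abs_le_collarX {ℓ s t : ℝ} (hℓ : 0 < ℓ) (hs : |s| ≤ collarX ℓ)
    (ht : |t| ≤ collarX ℓ) :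
    cos (ℓ * t / (2 * π)) ≤ cos (ℓ * s / (2 * π)) * exp (|s - t| / 3) := by
  have hlip := abs_cos_sub_cos_le_sin_mul (collarAngle_le_pi_div_two hℓ.le)
    (abs_mul_div_le_collarAngle hℓ ht) (abs_mul_div_le_collarAngle hℓ hs)
  have hdiff : |ℓ * t / (2 * π) - ℓ * s / (2 * π)| = ℓ / (2 * π) * |s - t| := by
    rw [← sub_div, ← mul_sub, abs_div, abs_mul, abs_of_pos hℓ, abs_sub_comm,
      abs_of_pos (by positivity : (0 : ℝ) < 2 * π)]
    ring
  have hcos_nonneg := cos_nonneg_of_abs_le_collarX hℓ hs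
  calc cos (ℓ * t / (2 * π))
      ≤ cos (ℓ * s / (2 * π)) + sin (collarAngle ℓ) * (ℓ / (2 * π) * |s - t|) := by
        rw [← hdiff]; linarith [(abs_le.1 hlip).2]
    _ = cos (ℓ * s / (2 * π)) + 3 * (ℓ / (2 * π)) * sin (collarAngle ℓ) * (|s - t| / 3) := by
        ring
    _ ≤ cos (ℓ * s / (2 * π)) + cos (ℓ * s / (2 * π)) * (|s - t| / 3) := by
        gcongr
        exact (sin_collarAngle_mul_le hℓ.le).trans (tanh_le_cos_of_abs_le_collarX hℓ hs)
    _ = cos (ℓ * s / (2 * π)) * (|s - t| / 3 + 1) := by ring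
    _ ≤ cos (ℓ * s / (2 * π)) * exp (|s - t| / 3) := by
        gcongr
        exact add_one_le_exp _

lemma inv_collarRho_sq (ℓ t : ℝ) :
    (collarRho ℓ t ^ 2)⁻¹ = (2 * π * cos (ℓ * t / (2 * π)) / ℓ) ^ 2 := by
  rw [collarRho, ← inv_pow, inv_div]

lemma exp_neg_mul_inv_collarRho_sq_le {ℓ s t : ℝ} (hℓ : 0 < ℓ) (hs : |s| ≤ collarX ℓ)
    (ht : |t| ≤ collarX ℓ) :
    exp (-|s - t|) * (collarRho ℓ t ^ 2)⁻¹ ≤ exp (-|s - t| / 3) * (collarRho ℓ s ^ 2)⁻¹ := by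
  have hexp : exp (-|s - t| / 3) = exp (-|s - t|) * exp (|s - t| / 3) ^ 2 := by
    rw [sq, ← exp_add, ← exp_add]; ring_nf
  have hct := cos_nonneg_of_abs_le_collarX hℓ ht
  rw [inv_collarRho_sq, inv_collarRho_sq, hexp]
  calc exp (-|s - t|) * (2 * π * cos (ℓ * t / (2 * π)) / ℓ) ^ 2
      ≤ exp (-|s - t|) * (2 * π * (cos (ℓ * s / (2 * π)) * exp (|s - t| / 3)) / ℓ) ^ 2 := by
        gcongr
        exact cos_le_cos_mul_exp_of_abs_le_collarX hℓ hs ht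
    _ = exp (-|s - t|) * exp (|s - t| / 3) ^ 2 * (2 * π * cos (ℓ * s / (2 * π)) / ℓ) ^ 2 := by
        ring

theorem collarRho_convolution_bound_general (ℓ : ℝ) (h0 : 0 < ℓ)
    (s : ℝ) (hs : s ∈ Set.Icc (-(collarX ℓ)) (collarX ℓ)) :
    (∫ s₀ in (-(collarX ℓ))..(collarX ℓ),
        Real.exp (-|s - s₀|) * (collarRho ℓ s₀ ^ 2)⁻¹)
      ≤ 6 * (collarRho ℓ s ^ 2)⁻¹ := by
  have hcont : Continuous fun t => (collarRho ℓ t ^ 2)⁻¹ := by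
    simp only [inv_collarRho_sq]; fun_prop
  calc (∫ s₀ in (-(collarX ℓ))..(collarX ℓ), exp (-|s - s₀|) * (collarRho ℓ s₀ ^ 2)⁻¹)
      ≤ ∫ s₀ in (-(collarX ℓ))..(collarX ℓ), exp (-|s - s₀| / 3) * (collarRho ℓ s ^ 2)⁻¹ :=
        intervalIntegral.integral_mono_on (hs.1.trans hs.2)
          ((by fun_prop : Continuous _).intervalIntegrable _ _)
          ((by fun_prop : Continuous _).intervalIntegrable _ _)
          fun t ht => exp_neg_mul_inv_collarRho_sq_le h0 (abs_le.2 hs) (abs_le.2 ht)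
    _ = (∫ s₀ in (-(collarX ℓ))..(collarX ℓ), exp (-|s - s₀| / 3)) * (collarRho ℓ s ^ 2)⁻¹ :=
        intervalIntegral.integral_mul_const _ _
    _ ≤ 6 * (collarRho ℓ s ^ 2)⁻¹ := by
        gcongr
        linarith [integral_exp_neg_abs_sub_div_le three_pos hs.1 hs.2]

/-- Convolution estimate: `∫_{-X}^{X} e^{-|s-s₀|}·ρ_ℓ(s₀)⁻² ds₀ ≤ 6·ρ_ℓ(s)⁻²`. -/
theorem collarRho_convolution_bound (ℓ : ℝ) (h0 : 0 < ℓ) (h1 : ℓ < 2 * Real.arsinh 1)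
    (s : ℝ) (hs : s ∈ Set.Icc (-(collarX ℓ)) (collarX ℓ)) :
    (∫ s₀ in (-(collarX ℓ))..(collarX ℓ),
        Real.exp (-|s - s₀|) * (collarRho ℓ s₀ ^ 2)⁻¹)
      ≤ 6 * (collarRho ℓ s ^ 2)⁻¹ :=
  collarRho_convolution_bound_general ℓ h0 s hs
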